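/- Let u, v ∈ ℝ³ and let x ∈ ℝ with x ≥ 0 satisfy 2·cosh(x) = tr( exp(u·σ) · exp(v·σ) ). Then x² ≤ 2(‖u‖² + ‖v‖²); equivalently, −x²/2 + ‖u‖² + ‖v‖² ≥ 0. -/

import Mathlib

/-!
Since `(u·σ)² = ‖u‖²`, the exponential series collapses to
`exp(u·σ) = cosh ‖u‖ + (sinh ‖u‖ / ‖u‖) u·σ`. The `σᵢ` are traceless and
`tr((u·σ)(v·σ)) = 2⟪u, v⟫`, so the trace of the product is
`2 (cosh a cosh b + ⟪(sinh a / a) u, (sinh b / b) v⟫)` with `a = ‖u‖`, `b = ‖v‖`, which by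
Cauchy–Schwarz is at most `2 (cosh a cosh b + sinh a sinh b) = 2 cosh (a + b)`.
Hence `|x| ≤ a + b`, and `x² ≤ (a + b)² ≤ 2 (a² + b²)`.
-/

open Matrix

/-- For `v ∈ ℝ³`, the matrix `v·σ = v₁σ₁ + v₂σ₂ + v₃σ₃` built from the Pauli matrices. -/
noncomputable def pauliDot (v : EuclideanSpace ℝ (Fin 3)) : Matrix (Fin 2) (Fin 2) ℂ :=
  (v 0 : ℂ) • !![0, 1; 1, 0] +
  (v 1 : ℂ) • !![0, -Complex.I; Complex.I, 0] +
  (v 2 : ℂ) • !![1, 0; 0, -1]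

open NormedSpace
open scoped Nat InnerProductSpace

section ExpOfSquareScalar

variable {𝔸 : Type*} [Ring 𝔸] [Algebra ℂ 𝔸] [TopologicalSpace 𝔸] [IsTopologicalRing 𝔸]
  [ContinuousSMul ℂ 𝔸] [T2Space 𝔸]

theorem exp_eq_cosh_smul_one_add_sinh_div_smul {A : 𝔸} {t : ℂ} (ht : t ≠ 0)
    (hA : A * A = t ^ 2 • (1 : 𝔸)) :
    exp A = Complex.cosh t • (1 : 𝔸) + (Complex.sinh t / t) • A := by
  have h_even (k : ℕ) : A ^ (2 * k) = t ^ (2 * k) • (1 : 𝔸) := by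
    rw [pow_mul, sq, hA, smul_pow, one_pow, ← pow_mul]
  have h_odd (k : ℕ) : A ^ (2 * k + 1) = t ^ (2 * k) • A := by
    rw [pow_succ, h_even, smul_one_mul]
  have h_cosh : HasSum (fun k : ℕ => ((2 * k)! : ℂ)⁻¹ • A ^ (2 * k)) (Complex.cosh t • 1) := by
    convert (Complex.hasSum_cosh t).smul_const (1 : 𝔸) using 2 with k
    rw [h_even, smul_smul, div_eq_inv_mul]
  have h_sinh : HasSum (fun k : ℕ => ((2 * k + 1)! : ℂ)⁻¹ • A ^ (2 * k + 1))
      ((Complex.sinh t / t) • A) := by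
    convert ((Complex.hasSum_sinh t).div_const t).smul_const A using 2 with k
    rw [h_odd, smul_smul, pow_succ]
    field_simp
  rw [exp_eq_tsum ℂ]
  exact (HasSum.even_add_odd (f := fun n : ℕ => (n !⁻¹ : ℂ) • A ^ n) h_cosh h_sinh).tsum_eq

end ExpOfSquareScalar

theorem norm_sinh_norm_div_norm_smul {E : Type*} [NormedAddCommGroup E] [NormedSpace ℝ E]
    (u : E) : ‖(Real.sinh ‖u‖ / ‖u‖) • u‖ = Real.sinh ‖u‖ := by
  rcases eq_or_ne u 0 with rfl | hu
  · simp
  rw [norm_smul, Real.norm_eq_abs,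
    abs_of_nonneg (div_nonneg (Real.sinh_nonneg_iff.2 (norm_nonneg u)) (norm_nonneg u)),
    div_mul_cancel₀ _ (norm_ne_zero_iff.2 hu)]

theorem pauliDot_smul (c : ℝ) (u : EuclideanSpace ℝ (Fin 3)) :
    pauliDot (c • u) = (c : ℂ) • pauliDot u := by
  simp only [pauliDot, PiLp.smul_apply, smul_eq_mul, Complex.ofReal_mul, smul_add, smul_smul]

theorem trace_pauliDot (u : EuclideanSpace ℝ (Fin 3)) : (pauliDot u).trace = 0 := by
  simp [pauliDot, trace_fin_two]

theorem pauliDot_mul_add_mul_swap (u v : EuclideanSpace ℝ (Fin 3)) :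
    pauliDot u * pauliDot v + pauliDot v * pauliDot u = ((2 * ⟪u, v⟫_ℝ : ℝ) : ℂ) • 1 := by
  have h_inner : ⟪u, v⟫_ℝ = u 0 * v 0 + u 1 * v 1 + u 2 * v 2 := by
    simp [PiLp.inner_apply, Fin.sum_univ_three, mul_comm]
  ext i j
  fin_cases i <;> fin_cases j <;>
    simp [pauliDot, h_inner] <;> ring_nf <;>
    simp only [Complex.I_sq] <;> ring

theorem pauliDot_mul_self (u : EuclideanSpace ℝ (Fin 3)) :
    pauliDot u * pauliDot u = ((‖u‖ : ℂ) ^ 2) • 1 := by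
  have h := pauliDot_mul_add_mul_swap u u
  rw [← two_smul ℂ, real_inner_self_eq_norm_sq] at h
  calc pauliDot u * pauliDot u = (2⁻¹ : ℂ) • (2 : ℂ) • (pauliDot u * pauliDot u) := by
        rw [smul_smul]; norm_num
    _ = ((‖u‖ : ℂ) ^ 2) • 1 := by
        rw [h, smul_smul]; push_cast; ring_nf

theorem trace_pauliDot_mul (u v : EuclideanSpace ℝ (Fin 3)) :
    (pauliDot u * pauliDot v).trace = 2 * ⟪u, v⟫_ℝ := by
  have h := congrArg trace (pauliDot_mul_add_mul_swap u v)
  rw [trace_add, trace_mul_comm (pauliDot v), trace_smul, trace_one] at h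
  simp only [Complex.ofReal_mul, Complex.ofReal_ofNat, Fintype.card_fin, Nat.cast_ofNat,
    smul_eq_mul] at h
  linear_combination h / 2

theorem exp_pauliDot (u : EuclideanSpace ℝ (Fin 3)) :
    exp (pauliDot u) = (Real.cosh ‖u‖ : ℂ) • 1 + pauliDot ((Real.sinh ‖u‖ / ‖u‖) • u) := by
  rcases eq_or_ne u 0 with rfl | hu
  · simp [pauliDot]
  rw [pauliDot_smul, exp_eq_cosh_smul_one_add_sinh_div_smul
    (Complex.ofReal_ne_zero.2 (norm_ne_zero_iff.2 hu)) (pauliDot_mul_self u)]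
  push_cast
  rfl

theorem trace_smul_one_add_pauliDot_mul (c d : ℝ) (w w' : EuclideanSpace ℝ (Fin 3)) :
    (((c : ℂ) • 1 + pauliDot w) * ((d : ℂ) • 1 + pauliDot w')).trace
      = ((2 * (c * d + ⟪w, w'⟫_ℝ) : ℝ) : ℂ) := by
  simp only [add_mul, mul_add, smul_mul_assoc, mul_smul_comm, one_mul, mul_one,
    trace_add, trace_smul, trace_one, trace_pauliDot, trace_pauliDot_mul, Fintype.card_fin,
    smul_eq_mul]
  push_cast
  ring

theorem re_trace_exp_pauliDot_mul_exp_pauliDot_le (u v : EuclideanSpace ℝ (Fin 3)) :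
    (exp (pauliDot u) * exp (pauliDot v)).trace.re ≤ 2 * Real.cosh (‖u‖ + ‖v‖) := by
  rw [exp_pauliDot, exp_pauliDot, trace_smul_one_add_pauliDot_mul, Complex.ofReal_re,
    Real.cosh_add]
  have h_cs := real_inner_le_norm ((Real.sinh ‖u‖ / ‖u‖) • u) ((Real.sinh ‖v‖ / ‖v‖) • v)
  rw [norm_sinh_norm_div_norm_smul, norm_sinh_norm_div_norm_smul] at h_cs
  linarith

theorem statement7_general (u v : EuclideanSpace ℝ (Fin 3)) (x : ℝ)
    (h : ((2 * Real.cosh x : ℝ) : ℂ) =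
      (NormedSpace.exp (pauliDot u) * NormedSpace.exp (pauliDot v)).trace) :
    x^2 ≤ 2 * (‖u‖^2 + ‖v‖^2) := by
  have h_cosh : Real.cosh x ≤ Real.cosh (‖u‖ + ‖v‖) := by
    have := re_trace_exp_pauliDot_mul_exp_pauliDot_le u v
    rw [← h, Complex.ofReal_re] at this
    linarith
  have h_abs : |x| ≤ ‖u‖ + ‖v‖ := by
    simpa [abs_of_nonneg (by positivity : 0 ≤ ‖u‖ + ‖v‖)] using Real.cosh_le_cosh.1 h_cosh
  calc x ^ 2 = |x| ^ 2 := (sq_abs x).symm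
    _ ≤ (‖u‖ + ‖v‖) ^ 2 := pow_le_pow_left₀ (abs_nonneg x) h_abs 2
    _ ≤ 2 * (‖u‖ ^ 2 + ‖v‖ ^ 2) := by nlinarith [sq_nonneg (‖u‖ - ‖v‖)]

/-- If `u, v ∈ ℝ³` and `x ≥ 0` satisfies
`2 cosh x = tr(exp(u·σ) exp(v·σ))`, then `x² ≤ 2(‖u‖² + ‖v‖²)`. -/
theorem statement7 (u v : EuclideanSpace ℝ (Fin 3)) (x : ℝ) (hx : 0 ≤ x)
    (h : ((2 * Real.cosh x : ℝ) : ℂ) =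
      (NormedSpace.exp (pauliDot u) * NormedSpace.exp (pauliDot v)).trace) :
    x^2 ≤ 2 * (‖u‖^2 + ‖v‖^2) :=
  statement7_general u v x h
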